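/- If τ is a finite sequence of distinct natural numbers with pix τ = 0, then for any natural number k not occurring in τ, pix(kτ) = 1 and lec(kτ) = lec τ, where kτ denotes the sequence τ with k prepended. -/

import Mathlib

namespace PaperStats

/-- `des w` is the number of descents of the word `w` (0-indexed positions `i`
with `w(i) > w(i+1)`). -/
def des (w : List ℕ) : ℕ :=
  ((Finset.range (w.length - 1)).filter fun i => w.getD (i + 1) 0 < w.getD i 0).card

/-- `inv w` is the number of inversions of the word `w`: pairs of positions
`i < j` with `w(i) > w(j)`. -/
def inv (w : List ℕ) : ℕ :=
  ((Finset.range w.length ×ˢ Finset.range w.length).filter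
    fun p => p.1 < p.2 ∧ w.getD p.2 0 < w.getD p.1 0).card

/-- An inversion `(i,j)` of `w` is admissible if either `w(j) < w(j+1)`
(`j` is not the last position and is followed by an ascent), or there is a
position `k` strictly between `i` and `j` with `w(j) > w(k)`. -/
def IsAdmissible (w : List ℕ) (i j : ℕ) : Prop :=
  (j + 1 < w.length ∧ w.getD j 0 < w.getD (j + 1) 0) ∨
    ∃ k, i < k ∧ k < j ∧ w.getD k 0 < w.getD j 0

instance (w : List ℕ) (i j : ℕ) : Decidable (IsAdmissible w i j) :=
  decidable_of_iff ((j + 1 < w.length ∧ w.getD j 0 < w.getD (j + 1) 0) ∨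
      ∃ k ∈ Finset.Ioo i j, w.getD k 0 < w.getD j 0) (by
    unfold IsAdmissible
    simp only [Finset.mem_Ioo, and_assoc])

/-- `ai w` is the number of admissible inversions of `w`. -/
def ai (w : List ℕ) : ℕ :=
  ((Finset.range w.length ×ˢ Finset.range w.length).filter
    fun p => p.1 < p.2 ∧ w.getD p.2 0 < w.getD p.1 0 ∧ IsAdmissible w p.1 p.2).card

/-- `aid w = ai w + des w`. -/
def aid (w : List ℕ) : ℕ := ai w + des w

/-- The statistic `aix`, defined recursively: `aix ∅ = 0`; writing a nonempty
word as `π = α m β`, where `m` is the smallest letter and `α` is the maximal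
prefix not containing `m`, one has `aix π = 1 + aix β` if `α = ∅`,
`aix π = 0` if `β = ∅` (and `α ≠ ∅`), and `aix π = aix α` otherwise. -/
def aix : List ℕ → ℕ
  | [] => 0
  | x :: xs =>
    if (x :: xs).takeWhile (fun a => decide (a ≠ xs.foldr min x)) = [] then
      1 + aix (((x :: xs).dropWhile (fun a => decide (a ≠ xs.foldr min x))).tail)
    else if ((x :: xs).dropWhile (fun a => decide (a ≠ xs.foldr min x))).tail = [] then 0
    else aix ((x :: xs).takeWhile (fun a => decide (a ≠ xs.foldr min x)))
termination_by w => w.length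
decreasing_by
  all_goals simp only [List.foldr_attach] at *
  · have h1 := (List.dropWhile_sublist (l := x :: xs) (fun a => decide (a ≠ xs.foldr min x))).length_le
    have h2 := List.length_tail (l := (x :: xs).dropWhile (fun a => decide (a ≠ xs.foldr min x)))
    simp only [List.length_cons] at *
    omega
  · rename_i hα hβ
    have h0 : ((x :: xs).takeWhile (fun a => decide (a ≠ xs.foldr min x))) ++
        ((x :: xs).dropWhile (fun a => decide (a ≠ xs.foldr min x))) = x :: xs :=
      List.takeWhile_append_dropWhile ..
    have h1 : ((x :: xs).dropWhile (fun a => decide (a ≠ xs.foldr min x))) ≠ [] := by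
      intro h
      apply hβ
      rw [h]
      rfl
    have h2 := congrArg List.length h0
    simp only [List.length_append, List.length_cons] at h2
    have h3 : 0 < ((x :: xs).dropWhile (fun a => decide (a ≠ xs.foldr min x))).length :=
      List.length_pos_iff.mpr h1
    simp only [List.length_cons]
    omega

/-- The map `f(k,τ)`: with `m` the smallest letter of `τ` together with `k`
(`k` not occurring in `τ`), and `τ = α m β` with `α` the maximal prefix of `τ`
avoiding `m`: `f(k,∅) = k`; `f(k,τ) = kτ` if `k = m`; and for `k > m`,
`f(k,τ) = f(k,β) m` if `α = ∅`, `f(k,τ) = k m α` if `β = ∅`, and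
`f(k,τ) = f(k,α) m β` otherwise. -/
def fkt (k : ℕ) : List ℕ → List ℕ
  | [] => [k]
  | x :: xs =>
    if k < xs.foldr min x then k :: x :: xs
    else if (x :: xs).takeWhile (fun a => decide (a ≠ xs.foldr min x)) = [] then
      fkt k (((x :: xs).dropWhile (fun a => decide (a ≠ xs.foldr min x))).tail) ++
        [xs.foldr min x]
    else if ((x :: xs).dropWhile (fun a => decide (a ≠ xs.foldr min x))).tail = [] then
      k :: xs.foldr min x :: ((x :: xs).takeWhile (fun a => decide (a ≠ xs.foldr min x)))
    else
      fkt k ((x :: xs).takeWhile (fun a => decide (a ≠ xs.foldr min x))) ++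
        xs.foldr min x :: ((x :: xs).dropWhile (fun a => decide (a ≠ xs.foldr min x))).tail
termination_by w => w.length
decreasing_by
  all_goals simp only [List.foldr_attach] at *
  · have h1 := (List.dropWhile_sublist (l := x :: xs) (fun a => decide (a ≠ xs.foldr min x))).length_le
    have h2 := List.length_tail (l := (x :: xs).dropWhile (fun a => decide (a ≠ xs.foldr min x)))
    simp only [List.length_cons] at *
    omega
  · rename_i hk hα hβ
    have h0 : ((x :: xs).takeWhile (fun a => decide (a ≠ xs.foldr min x))) ++
        ((x :: xs).dropWhile (fun a => decide (a ≠ xs.foldr min x))) = x :: xs :=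
      List.takeWhile_append_dropWhile ..
    have h1 : ((x :: xs).dropWhile (fun a => decide (a ≠ xs.foldr min x))) ≠ [] := by
      intro h
      apply hβ
      rw [h]
      rfl
    have h2 := congrArg List.length h0
    simp only [List.length_append, List.length_cons] at h2
    have h3 : 0 < ((x :: xs).dropWhile (fun a => decide (a ≠ xs.foldr min x))).length :=
      List.length_pos_iff.mpr h1
    simp only [List.length_cons]
    omega

/-- `ini w` is the first letter of `w`. -/
def ini (w : List ℕ) : ℕ := w.headD 0

/-- The word of a permutation `π ∈ S_n`, namely `π(1) π(2) … π(n)`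
(with values in `{1, …, n}`). -/
def permList {n : ℕ} (π : Equiv.Perm (Fin n)) : List ℕ :=
  List.ofFn fun i => (π i : ℕ) + 1

/-- The bijection `φ`: `φ(π) = f(π(1), f(π(2), ⋯ f(π(n), ∅) ⋯ ))`. -/
def phiW (w : List ℕ) : List ℕ := w.foldr fkt []

/-- Helper: `decRun l` splits `l` into its maximal weakly decreasing prefix
and the rest. -/
def decRun : List ℕ → List ℕ × List ℕ
  | [] => ([], [])
  | [x] => ([x], [])
  | x :: y :: rest =>
    if y ≤ x then ((x :: (decRun (y :: rest)).1), (decRun (y :: rest)).2)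
    else ([x], y :: rest)

theorem decRun_append : ∀ l : List ℕ, (decRun l).1 ++ (decRun l).2 = l
  | [] => rfl
  | [x] => rfl
  | x :: y :: rest => by
    rw [decRun]
    split
    · simpa using decRun_append (y :: rest)
    · rfl

/-- Helper computing the hook factorization of a word from its reversal: the
rightmost hook of the word starts at its rightmost descent top, i.e. it is
obtained by extending the maximal weakly decreasing prefix of the reversed word
by one more letter; the process is repeated on what remains, and when no
letters usable for a hook remain the word left over is the increasing part
`π₀`. The result is `(π₀, [π₁, …, π_k])`. -/
def hookRev (r : List ℕ) : List ℕ × List (List ℕ) :=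
  match h : (decRun r).2 with
  | [] => (r.reverse, [])
  | z :: rest =>
    ((hookRev rest).1, (hookRev rest).2 ++ [z :: (decRun r).1.reverse])
termination_by r.length
decreasing_by
  have h2 := congrArg List.length (decRun_append r)
  rw [h] at h2
  simp only [List.length_append, List.length_cons] at h2
  omega

/-- The hook factorization `(π₀, [π₁, …, π_k])` of a word
`w = π₀ π₁ ⋯ π_k`, where `π₀` is increasing and each `π_i`, `i ≥ 1`, is a
hook. -/
def hookSplit (w : List ℕ) : List ℕ × List (List ℕ) := hookRev w.reverse

/-- `pix w` is the length of the initial increasing factor `π₀` in the hook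
factorization of `w`. -/
def pix (w : List ℕ) : ℕ := (hookSplit w).1.length

/-- `lec w` is the sum of the numbers of inversions of the hooks in the hook
factorization of `w`. -/
def lec (w : List ℕ) : ℕ := ((hookSplit w).2.map inv).sum

/-- A word `w(1) … w(r)` with `r ≥ 2` is a hook if
`w(1) > w(2) ≤ w(3) ≤ ⋯ ≤ w(r)`. -/
def IsHook (w : List ℕ) : Prop :=
  ∃ a b rest, w = a :: b :: rest ∧ b < a ∧ List.Chain' (· ≤ ·) (b :: rest)

/-- `w(i)` is a left-to-right maximum of `w` if `w(k) < w(i)` for all `k < i`. -/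
def IsLRMax (w : List ℕ) (i : ℕ) : Prop := ∀ k < i, w.getD k 0 < w.getD i 0

instance (w : List ℕ) (i : ℕ) : Decidable (IsLRMax w i) := by
  unfold IsLRMax; infer_instance

/-- `mix w` counts the pairs of positions `i < j` such that either
`w(i) > w(j)` and `w(i)` is a left-to-right maximum, or `w(i) < w(j)` and
there is `k < i` with `w(k) > w(j)`. -/
def mix (w : List ℕ) : ℕ :=
  ((Finset.range w.length ×ˢ Finset.range w.length).filter fun p =>
    p.1 < p.2 ∧ ((w.getD p.2 0 < w.getD p.1 0 ∧ IsLRMax w p.1) ∨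
      (w.getD p.1 0 < w.getD p.2 0 ∧ ∃ k ∈ Finset.range p.1, w.getD p.2 0 < w.getD k 0))).card

/-- `das w` counts the positions `i` such that either `w(i) > w(i+1)` and
`w(i)` is a left-to-right maximum, or `w(i) < w(i+1)` and there is `k < i`
with `w(k) > w(i+1)`. -/
def das (w : List ℕ) : ℕ :=
  ((Finset.range (w.length - 1)).filter fun i =>
    (w.getD (i + 1) 0 < w.getD i 0 ∧ IsLRMax w i) ∨
      (w.getD i 0 < w.getD (i + 1) 0 ∧ ∃ k ∈ Finset.range i, w.getD (i + 1) 0 < w.getD k 0)).card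

/-- The values of the left-to-right maxima of a word, listed in increasing
order (which is also their order of occurrence). -/
def lrMaxima : List ℕ → List ℕ
  | [] => []
  | x :: xs => x :: lrMaxima (xs.filter fun a => decide (x < a))
termination_by l => l.length
decreasing_by
  simp only [List.length_unattach]
  refine Nat.lt_of_le_of_lt (List.length_filter_le _ _) ?_
  simp only [List.length_attach]
  have := xs.length_filter_le (fun a => decide (x < a))
  simp only [List.length_cons]
  omega

/-- `Bset w m` is the list of entries of `w` that are smaller than `m` and lie
to the right of (the first occurrence of) `m` in `w`. -/
def Bset (w : List ℕ) (m : ℕ) : List ℕ :=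
  ((w.dropWhile fun a => decide (a ≠ m)).tail).filter fun a => decide (a < m)

/-- Helper for `psiS`: replace the letters satisfying `P`, in order, by the
letters of the first list. -/
def replaceSub (P : ℕ → Bool) : List ℕ → List ℕ → List ℕ
  | _, [] => []
  | rs, x :: xs =>
    if P x then rs.headD x :: replaceSub P rs.tail xs else x :: replaceSub P rs xs

/-- `psiS S w` is `ψ_S(w)`: the result of reversing, in place, the subword of
`w` consisting of the entries belonging to `S`. -/
def psiS (S : List ℕ) (w : List ℕ) : List ℕ :=
  replaceSub (fun a => decide (a ∈ S)) ((w.filter fun a => decide (a ∈ S)).reverse) w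

/-- Helper applying the alternating composition
`ψ_{B₁} ∘ ψ_{B₂ ∩ B₁} ∘ ψ_{B₂} ∘ ⋯ ∘ ψ_{B_{k-1}} ∘ ψ_{B_k ∩ B_{k-1}} ∘ ψ_{B_k}`
to `w`, given the list `[B_k, B_{k-1}, …, B₁]`. -/
def psiChain : List (List ℕ) → List ℕ → List ℕ
  | [], w => w
  | [B], w => psiS B w
  | B :: B' :: rest, w => psiChain (B' :: rest) (psiS (B.inter B') (psiS B w))

/-- The Brändén–Claesson bijection `ψ`. -/
def psi (w : List ℕ) : List ℕ :=
  psiChain (((lrMaxima w).map (Bset w)).reverse) w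

/-! `hookSplit` peels hooks off the right end of a word. If `pix τ = 0` this consumes all
of `τ`, and on `kτ` it makes exactly the same steps: each step removes from the reversed
word its maximal weakly decreasing prefix plus one more letter, and that letter always
comes from `τ`, so the final letter `k` is never touched. What is left at the end is `k`
alone, so `π₀ = k` and the hooks of `kτ` are those of `τ`. -/

theorem decRun_append_singleton (k : ℕ) :
    ∀ r : List ℕ, (decRun r).2 ≠ [] → decRun (r ++ [k]) = ((decRun r).1, (decRun r).2 ++ [k])
  | [], h | [_], h => absurd rfl h
  | x :: y :: rest, h => by
    by_cases hyx : y ≤ x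
    · have ih := decRun_append_singleton k (y :: rest) (by simpa [decRun, hyx] using h)
      simp only [List.cons_append, decRun, hyx, if_true] at ih ⊢
      rw [ih]
    · simp [decRun, hyx]

theorem hookRev_of_decRun_snd_eq_nil {r : List ℕ} (hr : (decRun r).2 = []) :
    hookRev r = (r.reverse, []) := by
  rw [hookRev]
  split <;> simp_all

theorem hookRev_of_decRun_snd_eq_cons {r rest : List ℕ} {z : ℕ} (hr : (decRun r).2 = z :: rest) :
    hookRev r = ((hookRev rest).1, (hookRev rest).2 ++ [z :: (decRun r).1.reverse]) := by
  rw [hookRev]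
  split <;> simp_all

theorem hookRev_append_singleton (k : ℕ) {r : List ℕ} (h : (hookRev r).1 = []) :
    hookRev (r ++ [k]) = ([k], (hookRev r).2) := by
  induction r using hookRev.induct with
  | case1 r hr =>
    have hnil := hookRev_of_decRun_snd_eq_nil hr
    rw [hnil, List.reverse_eq_nil_iff] at h
    subst h
    rw [hnil]
    exact hookRev_of_decRun_snd_eq_nil (r := [k]) rfl
  | case2 r z rest hr ih =>
    rw [hookRev_of_decRun_snd_eq_cons hr] at h ⊢
    have hdec := decRun_append_singleton k r (by simp [hr])
    rw [hookRev_of_decRun_snd_eq_cons (rest := rest ++ [k]) (z := z) (by rw [hdec, hr]; rfl),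
      ih h, hdec]

theorem hookSplit_cons_of_pix_eq_zero (k : ℕ) {τ : List ℕ} (h0 : pix τ = 0) :
    hookSplit (k :: τ) = ([k], (hookSplit τ).2) := by
  rw [hookSplit, List.reverse_cons]
  exact hookRev_append_singleton k (List.length_eq_zero_iff.mp h0)

theorem pix_lec_cons_of_pix_eq_zero_general (k : ℕ) (τ : List ℕ) (h0 : pix τ = 0) :
    pix (k :: τ) = 1 ∧ lec (k :: τ) = lec τ := by
  simp [pix, lec, hookSplit_cons_of_pix_eq_zero k h0]

/-- If `pix τ = 0`, then `pix(kτ) = 1` and `lec(kτ) = lec τ`. -/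
theorem pix_lec_cons_of_pix_eq_zero (k : ℕ) (τ : List ℕ) (hτ : τ.Nodup)
    (hk : k ∉ τ) (h0 : pix τ = 0) :
    pix (k :: τ) = 1 ∧ lec (k :: τ) = lec τ :=
  pix_lec_cons_of_pix_eq_zero_general k τ h0

end PaperStats
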